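/- Let G = (V,E) be a graph, A a proper assignment, and P = p_0, p_1, ..., p_l a semi-alternating path: each consecutive pair p_i p_{i+1} is an edge of G or p_i = p_{i+1}, the pairs (p_1,p_2), (p_3,p_4), ..., (p_{l-2},p_{l-1}) all belong to A (with l odd), and the pairs (p_0,p_1) and (p_{l-1},p_l) do not, where p_0 has unmet demand (in-count < d(p_0)) and p_l has unused capacity (out-count < c(p_l)). Then the assignment A'' obtained by removing the pairs (p_1,p_2), (p_3,p_4), ..., (p_{l-2},p_{l-1}) and adding the pairs (p_1,p_0), (p_3,p_2), ..., (p_l, p_{l-1}) is proper, satisfies t(A'') = t(A) − 1, and |S(A'')| ≤ |S(A)| + 1. -/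
import Mathlib


open Finset

variable {V : Type*}

/-- Number of pairs in `A` with first coordinate `u` (capacity used by `u`). -/
def outCount [DecidableEq V] (A : Multiset (V × V)) (u : V) : ℕ :=
  A.countP (fun p => p.1 = u)

/-- Number of pairs in `A` with second coordinate `v` (demand of `v` covered). -/
def inCount [DecidableEq V] (A : Multiset (V × V)) (v : V) : ℕ :=
  A.countP (fun p => p.2 = v)

/-- Every pair of the multiset is an edge of `G` or a self-loop. -/
def ValidPairs (G : SimpleGraph V) (A : Multiset (V × V)) : Prop :=
  ∀ p ∈ A, G.Adj p.1 p.2 ∨ p.1 = p.2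

/-- The dominating set of an assignment: vertices occurring as first coordinates. -/
def domSet [DecidableEq V] (A : Multiset (V × V)) : Finset V :=
  (A.map Prod.fst).toFinset

/-- Total unmet demand of an assignment. -/
def unmet [Fintype V] [DecidableEq V] (d : V → ℕ) (A : Multiset (V × V)) : ℕ :=
  ∑ v, (d v - inCount A v)


lemma inN [DecidableEq V] (p : ℕ → V) (k : ℕ) (w : V) :
    inCount (((List.range (k+1)).map (fun i => (p (2*i+1), p (2*i)))) : Multiset (V × V)) w
    = inCount (((List.range k).map (fun i => (p (2*i+1), p (2*i+2)))) : Multiset (V × V)) w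
      + (if p 0 = w then 1 else 0) := by
  simp only [inCount, Multiset.coe_countP]
  rw [List.range_succ_eq_map]
  simp [List.countP_cons, List.countP_map, Function.comp_def, Nat.mul_succ, Nat.mul_add, add_comm]

lemma outN [DecidableEq V] (p : ℕ → V) (k : ℕ) (u : V) :
    outCount (((List.range (k+1)).map (fun i => (p (2*i+1), p (2*i)))) : Multiset (V × V)) u
    = outCount (((List.range k).map (fun i => (p (2*i+1), p (2*i+2)))) : Multiset (V × V)) u
      + (if p (2*k+1) = u then 1 else 0) := by
  simp only [outCount, Multiset.coe_countP]
  rw [List.range_succ]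
  simp only [List.countP_append, List.map_append, List.countP_map, Function.comp_def]
  by_cases h : p (2*k+1) = u <;> simp [h, List.countP_cons]

lemma countP_sub_add {α : Type*} [DecidableEq α] (A R : Multiset α) (h : R ≤ A) (pr : α → Prop)
    [DecidablePred pr] : (A - R).countP pr + R.countP pr = A.countP pr := by
  rw [← Multiset.countP_add, tsub_add_cancel_of_le h]

/-- Augmenting along a semi-alternating path `p 0, …, p l` (`l` odd) from a
vertex with unmet demand to a vertex with unused capacity yields a proper
assignment with one less unit of unmet demand and at most one extra
dominating vertex. -/
theorem stmt5 [Fintype V] [DecidableEq V] (G : SimpleGraph V)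
    (d c : V → ℕ) (A : Multiset (V × V))
    (hA : ValidPairs G A) (hAd : ∀ w, inCount A w ≤ d w)
    (hAc : ∀ u, outCount A u ≤ c u)
    (l : ℕ) (hlodd : Odd l) (p : ℕ → V)
    (hpath : ∀ i < l, G.Adj (p i) (p (i + 1)) ∨ p i = p (i + 1))
    (hsub : (((List.range ((l - 1) / 2)).map
        (fun i => (p (2 * i + 1), p (2 * i + 2)))) : Multiset (V × V)) ≤ A)
    (hfirst : (p 0, p 1) ∉ A) (hlast : (p (l - 1), p l) ∉ A)
    (hU : inCount A (p 0) < d (p 0)) (hW : outCount A (p l) < c (p l)) :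
    ValidPairs G
        ((A - (((List.range ((l - 1) / 2)).map
            (fun i => (p (2 * i + 1), p (2 * i + 2)))) : Multiset (V × V))) +
          (((List.range ((l + 1) / 2)).map
            (fun i => (p (2 * i + 1), p (2 * i)))) : Multiset (V × V))) ∧
    (∀ w, inCount
        ((A - (((List.range ((l - 1) / 2)).map
            (fun i => (p (2 * i + 1), p (2 * i + 2)))) : Multiset (V × V))) +
          (((List.range ((l + 1) / 2)).map
            (fun i => (p (2 * i + 1), p (2 * i)))) : Multiset (V × V))) w ≤ d w) ∧
    (∀ u, outCount
        ((A - (((List.range ((l - 1) / 2)).map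
            (fun i => (p (2 * i + 1), p (2 * i + 2)))) : Multiset (V × V))) +
          (((List.range ((l + 1) / 2)).map
            (fun i => (p (2 * i + 1), p (2 * i)))) : Multiset (V × V))) u ≤ c u) ∧
    unmet d
        ((A - (((List.range ((l - 1) / 2)).map
            (fun i => (p (2 * i + 1), p (2 * i + 2)))) : Multiset (V × V))) +
          (((List.range ((l + 1) / 2)).map
            (fun i => (p (2 * i + 1), p (2 * i)))) : Multiset (V × V))) + 1
      = unmet d A ∧
    (domSet
        ((A - (((List.range ((l - 1) / 2)).map
            (fun i => (p (2 * i + 1), p (2 * i + 2)))) : Multiset (V × V))) +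
          (((List.range ((l + 1) / 2)).map
            (fun i => (p (2 * i + 1), p (2 * i)))) : Multiset (V × V)))).card
      ≤ (domSet A).card + 1 := by

  obtain ⟨k, hk⟩ := hlodd
  subst hk
  have hk1 : (2 * k + 1 - 1) / 2 = k := by omega
  have hk2 : (2 * k + 1 + 1) / 2 = k + 1 := by omega
  rw [hk1] at hsub
  rw [hk1, hk2]
  set R : Multiset (V × V) :=
    (((List.range k).map (fun i => (p (2 * i + 1), p (2 * i + 2)))) : Multiset (V × V)) with hRdef
  set N : Multiset (V × V) :=
    (((List.range (k + 1)).map (fun i => (p (2 * i + 1), p (2 * i)))) : Multiset (V × V)) with hNdef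
  have hRA : ∀ q ∈ R, q ∈ A := fun q hq => Multiset.mem_of_le hsub hq
  have hsubA : ∀ q ∈ A - R, q ∈ A := fun q hq => Multiset.mem_of_le (tsub_le_self) hq
  have hin : ∀ w, inCount (A - R + N) w = inCount A w + (if p 0 = w then 1 else 0) := by
    intro w
    have h1 := countP_sub_add A R hsub (fun q => q.2 = w)
    have h2 := inN p k w
    rw [← hRdef, ← hNdef] at h2
    simp only [inCount, Multiset.countP_add] at *
    omega
  have hout : ∀ u, outCount (A - R + N) u
      = outCount A u + (if p (2 * k + 1) = u then 1 else 0) := by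
    intro u
    have h1 := countP_sub_add A R hsub (fun q => q.1 = u)
    have h2 := outN p k u
    rw [← hRdef, ← hNdef] at h2
    simp only [outCount, Multiset.countP_add] at *
    omega
  refine ⟨?_, ?_, ?_, ?_, ?_⟩
  · intro q hq
    rcases Multiset.mem_add.mp hq with h | h
    · exact hA q (hsubA q h)
    · rw [hNdef, Multiset.mem_coe, List.mem_map] at h
      obtain ⟨i, hi, rfl⟩ := h
      rw [List.mem_range] at hi
      rcases hpath (2 * i) (by omega) with h | h
      · exact Or.inl h.symm
      · exact Or.inr h.symm
  · intro w
    rw [hin w]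
    by_cases h : p 0 = w
    · subst h; simpa using hU
    · simpa [h] using hAd w
  · intro u
    rw [hout u]
    by_cases h : p (2 * k + 1) = u
    · subst h; simpa using hW
    · simpa [h] using hAc u
  · simp only [unmet]
    rw [← Finset.add_sum_erase _ _ (Finset.mem_univ (p 0)),
      ← Finset.add_sum_erase _ (fun v => d v - inCount A v) (Finset.mem_univ (p 0))]
    have hsame : ∑ v ∈ Finset.univ.erase (p 0), (d v - inCount (A - R + N) v)
        = ∑ v ∈ Finset.univ.erase (p 0), (d v - inCount A v) := by
      refine Finset.sum_congr rfl fun v hv => ?_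
      have hne : p 0 ≠ v := fun h => (Finset.mem_erase.mp hv).1 h.symm
      rw [hin v, if_neg hne, add_zero]
    rw [hsame]
    have := hin (p 0)
    rw [if_pos rfl] at this
    omega
  · have hsubset : domSet (A - R + N) ⊆ insert (p (2 * k + 1)) (domSet A) := by
      intro x hx
      simp only [domSet, Multiset.mem_toFinset, Multiset.mem_map] at hx
      obtain ⟨q, hq, rfl⟩ := hx
      rcases Multiset.mem_add.mp hq with h | h
      · exact Finset.mem_insert_of_mem
          (by simp only [domSet, Multiset.mem_toFinset, Multiset.mem_map]
              exact ⟨q, hsubA q h, rfl⟩)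
      · rw [hNdef, Multiset.mem_coe, List.mem_map] at h
        obtain ⟨i, hi, rfl⟩ := h
        rw [List.mem_range] at hi
        rcases Nat.lt_succ_iff_lt_or_eq.mp hi with hik | rfl
        · refine Finset.mem_insert_of_mem ?_
          simp only [domSet, Multiset.mem_toFinset, Multiset.mem_map]
          refine ⟨(p (2 * i + 1), p (2 * i + 2)), hRA _ ?_, rfl⟩
          rw [hRdef, Multiset.mem_coe, List.mem_map]
          exact ⟨i, List.mem_range.mpr hik, rfl⟩
        · exact Finset.mem_insert_self _ _
    calc (domSet (A - R + N)).card ≤ (insert (p (2 * k + 1)) (domSet A)).card :=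
          Finset.card_le_card hsubset
      _ ≤ (domSet A).card + 1 := Finset.card_insert_le _ _
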